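/- (Squared task-space velocity corollary, k = 1.) Let q : ℝ → ℝ^d and φ : ℝ^d → ℝ^m be C^∞, fix t ∈ ℝ, and assume the Jacobian J = Dφ(q(t)) is nonzero. For h > 0, the true diagonal Hessian block at q(t) of the discretized squared-velocity objective Σ_s (1/2)‖(φ(q_{s+1}) − φ(q_s))/h‖² evaluated along the samples q_s = q(t + (s)·h) is H(h) = (2/h²) · Jᵀ J + (1/h²) · D²φ(q(t))·( 2·φ(q(t)) − φ(q(t−h)) − φ(q(t+h)) ), and the Gauss-Newton block is H_GN(h) = (2/h²) · Jᵀ J. Then there exist C > 0 and h₀ > 0 such that for all h ∈ (0, h₀), ‖H(h) − H_GN(h)‖ ≤ C · h² · ‖H_GN(h)‖, where ‖·‖ is the Frobenius norm; that is, the true Hessian block converges to the Gauss-Newton Hessian block in relative error at rate O(h²). -/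

import Mathlib

/-!
STATEMENT 5 (Squared task-space velocity corollary, k = 1): For smooth `q, φ` with
nonzero Jacobian `J = Dφ(q(t))`, the true diagonal Hessian block of the discretized
squared-velocity objective is
`H(h) = (2/h²) JᵀJ + (1/h²) D²φ(q(t))·(2 φ(q(t)) - φ(q(t-h)) - φ(q(t+h)))`
and the Gauss-Newton block is `H_GN(h) = (2/h²) JᵀJ`; then there exist `C > 0`, `h₀ > 0`
with `‖H(h) - H_GN(h)‖_F ≤ C h² ‖H_GN(h)‖_F` for all `h ∈ (0, h₀)`.
-/

open Filter Set Matrix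

/-- Componentwise gradient of `f : ℝ^m → ℝ`. -/
noncomputable def grad {m : ℕ} (f : (Fin m → ℝ) → ℝ) (v : Fin m → ℝ) : Fin m → ℝ :=
  fun a => fderiv ℝ f v (Pi.single a 1)

/-- Hessian matrix of `f : ℝ^m → ℝ` at `v`. -/
noncomputable def hess {m : ℕ} (f : (Fin m → ℝ) → ℝ) (v : Fin m → ℝ) :
    Matrix (Fin m) (Fin m) ℝ :=
  Matrix.of fun a b => fderiv ℝ (fun x => fderiv ℝ f x (Pi.single b 1)) v (Pi.single a 1)

/-- Jacobian matrix of `φ : ℝ^d → ℝ^m` at `x`. -/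
noncomputable def jac {d m : ℕ} (φ : (Fin d → ℝ) → (Fin m → ℝ)) (x : Fin d → ℝ) :
    Matrix (Fin m) (Fin d) ℝ :=
  Matrix.of fun a p => fderiv ℝ φ x (Pi.single p 1) a

/-- Contraction `D²φ(x) · w = ∑_α w_α ∇²φ_α(x)` of the second derivative of
`φ : ℝ^d → ℝ^m` with a vector `w ∈ ℝ^m`. -/
noncomputable def d2Contract {d m : ℕ} (φ : (Fin d → ℝ) → (Fin m → ℝ)) (x : Fin d → ℝ)
    (w : Fin m → ℝ) : Matrix (Fin d) (Fin d) ℝ :=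
  ∑ a : Fin m, w a • hess (fun y => φ y a) x

/-- Frobenius norm of a square matrix. -/
noncomputable def frob {d : ℕ} (A : Matrix (Fin d) (Fin d) ℝ) : ℝ :=
  Real.sqrt (∑ p : Fin d, ∑ r : Fin d, (A p r) ^ 2)

noncomputable def matE {d : ℕ} : Matrix (Fin d) (Fin d) ℝ →ₗ[ℝ] EuclideanSpace ℝ (Fin d × Fin d) where
  toFun A := (WithLp.equiv 2 _).symm (fun pr => A pr.1 pr.2)
  map_add' _ _ := rfl
  map_smul' _ _ := rfl

lemma frob_eq {d : ℕ} (A : Matrix (Fin d) (Fin d) ℝ) : frob A = ‖matE A‖ := by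
  rw [EuclideanSpace.norm_eq, frob]
  congr 1
  rw [Fintype.sum_prod_type]
  simp [matE, Real.norm_eq_abs, sq_abs]

lemma frob_nonneg {d : ℕ} (A : Matrix (Fin d) (Fin d) ℝ) : 0 ≤ frob A :=
  Real.sqrt_nonneg _

lemma frob_smul {d : ℕ} (c : ℝ) (A : Matrix (Fin d) (Fin d) ℝ) :
    frob (c • A) = |c| * frob A := by
  rw [frob_eq, frob_eq, LinearMap.map_smul, norm_smul, Real.norm_eq_abs]

lemma frob_sum_le {d m : ℕ} (f : Fin m → Matrix (Fin d) (Fin d) ℝ) :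
    frob (∑ a : Fin m, f a) ≤ ∑ a : Fin m, frob (f a) := by
  rw [frob_eq, map_sum]
  exact (norm_sum_le _ _).trans_eq (by simp [frob_eq])

lemma frob_pos {d : ℕ} {A : Matrix (Fin d) (Fin d) ℝ} (hA : A ≠ 0) : 0 < frob A := by
  rw [frob_eq, norm_pos_iff]
  intro h
  apply hA
  ext p r
  have := congrArg (fun v => v (p, r)) h
  simpa [matE] using this

theorem squared_velocity_hessian_relative_error_rate
    {d m : ℕ} (q : ℝ → (Fin d → ℝ)) (φ : (Fin d → ℝ) → (Fin m → ℝ))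
    (hq : ContDiff ℝ (⊤ : ℕ∞) q) (hφ : ContDiff ℝ (⊤ : ℕ∞) φ)
    (t : ℝ) (hJ : jac φ (q t) ≠ 0)
    (H HGN : ℝ → Matrix (Fin d) (Fin d) ℝ)
    (hH : ∀ h, H h =
      (2 / h ^ 2) • ((jac φ (q t))ᵀ * jac φ (q t)) +
        (1 / h ^ 2) • d2Contract φ (q t)
          ((2 : ℝ) • φ (q t) - φ (q (t - h)) - φ (q (t + h))))
    (hHGN : ∀ h, HGN h = (2 / h ^ 2) • ((jac φ (q t))ᵀ * jac φ (q t))) :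
    ∃ C : ℝ, 0 < C ∧ ∃ h₀ : ℝ, 0 < h₀ ∧
      ∀ h : ℝ, 0 < h → h < h₀ →
        frob (H h - HGN h) ≤ C * h ^ 2 * frob (HGN h) := by
  classical
  set J := jac φ (q t) with hJdef
  set M := Jᵀ * J with hMdef
  -- M ≠ 0, hence frob M > 0
  have hMne : M ≠ 0 := by
    obtain ⟨a, p, hap⟩ : ∃ a p, J a p ≠ 0 := by
      by_contra hcon
      push_neg at hcon
      exact hJ (by ext a p; simpa using hcon a p)
    intro h0
    have h1 : M p p = ∑ b, (J b p) ^ 2 := by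
      simp [hMdef, Matrix.mul_apply, Matrix.transpose_apply, sq]
    have h2 : (0 : ℝ) < M p p := by
      rw [h1]
      exact Finset.sum_pos' (fun i _ => sq_nonneg _)
        ⟨a, Finset.mem_univ a, by positivity⟩
    rw [h0] at h2
    simp at h2
  have hMf : 0 < frob M := frob_pos hMne
  -- the smooth curve in task space and its derivative
  set ψ : ℝ → (Fin m → ℝ) := fun s => φ (q s) with hψdef
  have hψ : ContDiff ℝ (⊤ : ℕ∞) ψ := hφ.comp hq
  have hψd : Differentiable ℝ ψ := hψ.differentiable (by simp)
  set G : ℝ → (Fin m → ℝ) := deriv ψ with hGdef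
  have hpsiInf : ContDiff ℝ ((⊤ : ℕ∞) : WithTop ℕ∞) ψ := hψ.of_le (by simp)
  have hG : ContDiff ℝ ((⊤ : ℕ∞) : WithTop ℕ∞) G := (contDiff_infty_iff_deriv.mp hpsiInf).2
  have hGd : Differentiable ℝ G := (contDiff_infty_iff_deriv.mp hG).1
  have hG' : Continuous (deriv G) := ((contDiff_infty_iff_deriv.mp hG).2.differentiable
    (by simp)).continuous
  -- bound deriv G on the compact interval [t-1, t+1]
  obtain ⟨L0, hL0⟩ := (isCompact_Icc (a := t - 1) (b := t + 1)).exists_bound_of_continuousOn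
    hG'.continuousOn
  set L : ℝ := max L0 0 with hLdef
  have hLnn : 0 ≤ L := le_max_right _ _
  -- G is L-Lipschitz on [t-1, t+1]
  have hGlip : ∀ x ∈ Icc (t - 1) (t + 1), ∀ y ∈ Icc (t - 1) (t + 1),
      ‖G y - G x‖ ≤ L * ‖y - x‖ := by
    intro x hx y hy
    exact Convex.norm_image_sub_le_of_norm_deriv_le (fun z _ => hGd z)
      (fun z hz => (hL0 z hz).trans (le_max_left _ _)) (convex_Icc _ _) hx hy
  -- the second-difference function
  set F : ℝ → (Fin m → ℝ) := fun h => (2 : ℝ) • ψ t - ψ (t - h) - ψ (t + h) with hFdef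
  have hF0 : F 0 = 0 := by
    simp [hFdef, two_smul]
  have hFderiv : ∀ h : ℝ, HasDerivAt F (G (t - h) - G (t + h)) h := by
    intro h
    have h1 : HasDerivAt (fun s : ℝ => t - s) (-1 : ℝ) h := by
      simpa using (hasDerivAt_id' h).const_sub t
    have h2 : HasDerivAt (fun s : ℝ => t + s) (1 : ℝ) h := by
      simpa using (hasDerivAt_id' h).const_add t
    have h3 : HasDerivAt (fun s : ℝ => ψ (t - s)) ((-1 : ℝ) • G (t - h)) h :=
      (hψd (t - h)).hasDerivAt.scomp h h1
    have h4 : HasDerivAt (fun s : ℝ => ψ (t + s)) ((1 : ℝ) • G (t + h)) h :=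
      (hψd (t + h)).hasDerivAt.scomp h h2
    have := ((hasDerivAt_const h ((2 : ℝ) • ψ t)).sub h3).sub h4
    refine this.congr_deriv ?_
    simp
  -- the key quadratic bound on F
  have hFbound : ∀ h : ℝ, 0 < h → h < 1 → ‖F h‖ ≤ 2 * L * h ^ 2 := by
    intro h hh0 hh1
    have hmem : ∀ x ∈ Icc (0 : ℝ) h, x ∈ Icc (0 : ℝ) h := fun x hx => hx
    have key := norm_image_sub_le_of_norm_deriv_le_segment'
      (f := F) (f' := fun x => G (t - x) - G (t + x)) (a := 0) (b := h)
      (C := 2 * L * h)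
      (fun x _ => (hFderiv x).hasDerivWithinAt)
      ?_ h (right_mem_Icc.mpr hh0.le)
    · rw [hF0, sub_zero, sub_zero] at key
      calc ‖F h‖ ≤ 2 * L * h * h := key
        _ = 2 * L * h ^ 2 := by ring
    · intro x hx
      obtain ⟨hx0, hxh⟩ := hx
      have hx1 : x ≤ 1 := le_of_lt (hxh.trans_le hh1.le)
      have hmem1 : t + x ∈ Icc (t - 1) (t + 1) := by constructor <;> linarith
      have hmem2 : t - x ∈ Icc (t - 1) (t + 1) := by constructor <;> linarith
      have := hGlip (t + x) hmem1 (t - x) hmem2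
      have hnorm : ‖(t - x) - (t + x)‖ = 2 * x := by
        rw [show (t - x) - (t + x) = -(2 * x) by ring, norm_neg,
          Real.norm_eq_abs, abs_of_nonneg (by linarith)]
      rw [hnorm] at this
      calc ‖G (t - x) - G (t + x)‖ ≤ L * (2 * x) := this
        _ ≤ 2 * L * h := by nlinarith
  -- the sum of Frobenius norms of the Hessians
  set K : ℝ := ∑ a : Fin m, frob (hess (fun y => φ y a) (q t)) with hKdef
  have hKnn : 0 ≤ K := Finset.sum_nonneg fun a _ => frob_nonneg _
  -- choose C and h₀
  refine ⟨L * K / frob M + 1, add_pos_of_nonneg_of_pos (div_nonneg (mul_nonneg hLnn hKnn) hMf.le) one_pos, 1, one_pos, fun h hh0 hh1 => ?_⟩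
  have hh2 : (0 : ℝ) < h ^ 2 := by positivity
  -- compute H h - HGN h
  have hdiff : H h - HGN h = (1 / h ^ 2) • d2Contract φ (q t) (F h) := by
    rw [hH, hHGN, add_sub_cancel_left]
  -- bound the left side
  have hw : ∀ a : Fin m, |F h a| ≤ ‖F h‖ := by
    intro a
    simpa [Real.norm_eq_abs] using norm_le_pi_norm (F h) a
  have hd2 : frob (d2Contract φ (q t) (F h)) ≤ ‖F h‖ * K := by
    rw [d2Contract]
    refine (frob_sum_le _).trans ?_
    rw [hKdef, Finset.mul_sum]
    refine Finset.sum_le_sum fun a _ => ?_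
    rw [frob_smul]
    exact mul_le_mul_of_nonneg_right (hw a) (frob_nonneg _)
  have hlhs : frob (H h - HGN h) ≤ 2 * L * K := by
    rw [hdiff, frob_smul, abs_of_pos (by positivity)]
    calc (1 / h ^ 2) * frob (d2Contract φ (q t) (F h))
        ≤ (1 / h ^ 2) * (‖F h‖ * K) := by
          exact mul_le_mul_of_nonneg_left hd2 (by positivity)
      _ ≤ (1 / h ^ 2) * ((2 * L * h ^ 2) * K) := by
          refine mul_le_mul_of_nonneg_left (mul_le_mul_of_nonneg_right
            (hFbound h hh0 hh1) hKnn) (by positivity)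
      _ = 2 * L * K := by field_simp
  -- compute the right side
  have hrhs : (L * K / frob M + 1) * h ^ 2 * frob (HGN h) = 2 * L * K + 2 * frob M := by
    rw [hHGN, frob_smul, abs_of_pos (by positivity)]
    field_simp
  rw [hrhs]
  linarith
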